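/- arXiv:1905.08683 — 2 statements merged into one kernel-verified Lean document; each statement's English description precedes it below -/
import Mathlib

section
/- Let G and H be finite connected simple graphs, let c be a pebbling configuration on the Cartesian product G□H, and let (r_G, r_H) be any root vertex of G□H. If the total G-set count of c is at least π(H), i.e. Σ_{j∈V(H)} ⌊c̃_j / π(G)⌋ ≥ π(H), then c is (r_G, r_H)-solvable. -/
open SimpleGraph Finset

/-- A single pebbling move on `G`: remove two pebbles from a vertex `v` with at least two
pebbles and add one pebble to an adjacent vertex `w`. -/
def PebblingMove {V : Type*} (G : SimpleGraph V) (c c' : V → ℕ) : Prop :=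
  ∃ v w, G.Adj v w ∧ 2 ≤ c v ∧ c' v = c v - 2 ∧ c' w = c w + 1 ∧
    ∀ u, u ≠ v → u ≠ w → c' u = c u

/-- Some finite sequence of pebbling moves starting from `c` places at least `t` pebbles
on the vertex `r`. -/
def NSolvable {V : Type*} (G : SimpleGraph V) (c : V → ℕ) (r : V) (t : ℕ) : Prop :=
  ∃ c', Relation.ReflTransGen (PebblingMove G) c c' ∧ t ≤ c' r

/-- A configuration `c` is `r`-solvable. -/
def Solvable {V : Type*} (G : SimpleGraph V) (c : V → ℕ) (r : V) : Prop :=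
  NSolvable G c r 1

/-- The pebbling number `π(G)`: least `k` such that every configuration of size `k` is
`r`-solvable for every root `r`. -/
noncomputable def pebblingNumber {V : Type*} (G : SimpleGraph V) [Fintype V] : ℕ :=
  sInf {k | ∀ c : V → ℕ, (∑ v, c v) = k → ∀ r, Solvable G c r}

/-- The 2-pebbling number `π₂(G, s)`: least `m` such that for every root `r`, every
configuration of size at least `m` with support of size exactly `s` can place two pebbles
on `r`. -/
noncomputable def twoPebblingNumber {V : Type*} (G : SimpleGraph V) [Fintype V] (s : ℕ) : ℕ :=
  sInf {m | ∀ (r : V) (c : V → ℕ), m ≤ ∑ v, c v →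
    (Finset.univ.filter fun v => 1 ≤ c v).card = s → NSolvable G c r 2}

/-!
Pebbling moves inside a copy of `G` or of `H` are moves of `G □ H`, and move sequences of two
configurations can be run side by side on their sum. Using `π(G)` of its pebbles at a time, the
slice `G_j` therefore delivers `⌊c̃_j / π(G)⌋` pebbles to `(r_G, j)`. Afterwards the copy
`{r_G} × H` holds at least `π(H)` pebbles, which solve `(r_G, r_H)` inside it.
-/

section Moves

variable {V : Type*} {G : SimpleGraph V}

theorem PebblingMove.add_right {c d : V → ℕ} (h : PebblingMove G c d) (e : V → ℕ) :
    PebblingMove G (c + e) (d + e) := by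
  obtain ⟨v, w, hadj, hv, hdv, hdw, hdu⟩ := h
  refine ⟨v, w, hadj, ?_, ?_, ?_, fun u huv huw => ?_⟩ <;> simp only [Pi.add_apply] <;> grind

theorem PebblingMove.reflTransGen_add_right {c d : V → ℕ}
    (h : Relation.ReflTransGen (PebblingMove G) c d) (e : V → ℕ) :
    Relation.ReflTransGen (PebblingMove G) (c + e) (d + e) := by
  induction h with
  | refl => exact .refl
  | tail _ hmove ih => exact ih.tail (hmove.add_right e)

theorem PebblingMove.reflTransGen_add {c d c' d' : V → ℕ}
    (h : Relation.ReflTransGen (PebblingMove G) c d)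
    (h' : Relation.ReflTransGen (PebblingMove G) c' d') :
    Relation.ReflTransGen (PebblingMove G) (c + c') (d + d') := by
  refine (reflTransGen_add_right h c').trans ?_
  rw [add_comm d, add_comm d]
  exact reflTransGen_add_right h' d

theorem PebblingMove.reflTransGen_sum {ι : Type*} (s : Finset ι) {c d : ι → V → ℕ}
    (h : ∀ i ∈ s, Relation.ReflTransGen (PebblingMove G) (c i) (d i)) :
    Relation.ReflTransGen (PebblingMove G) (∑ i ∈ s, c i) (∑ i ∈ s, d i) := by
  classical
  induction s using Finset.induction_on with
  | empty => exact .refl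
  | insert i s hi ih =>
    rw [Finset.sum_insert hi, Finset.sum_insert hi]
    exact reflTransGen_add (h i (mem_insert_self i s))
      (ih fun j hj => h j (mem_insert_of_mem hj))

theorem PebblingMove.lift {W : Type*} {K : SimpleGraph W} (f : G ↪g K)
    {x y : V → ℕ} (h : PebblingMove G x y) {C : W → ℕ} (hC : ∀ u, C (f u) = x u) :
    ∃ D, PebblingMove K C D ∧ ∀ u, D (f u) = y u := by
  classical
  obtain ⟨v, w, hadj, hv, hyv, hyw, hyu⟩ := h
  have hfvw : f v ≠ f w := f.injective.ne (G.ne_of_adj hadj)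
  refine ⟨Function.update (Function.update C (f v) (C (f v) - 2)) (f w) (C (f w) + 1),
    ⟨f v, f w, f.map_adj_iff.mpr hadj, by rw [hC]; exact hv, ?_, ?_, fun p hpv hpw => ?_⟩,
    fun u => ?_⟩
  · simp [hfvw]
  · simp
  · simp [hpv, hpw]
  · by_cases huw : u = w
    · subst huw; simp [hC, hyw]
    by_cases huv : u = v
    · subst huv; simp [hfvw, hC, hyv]
    · simp [f.injective.ne huw, f.injective.ne huv, hC, hyu u huv huw]

theorem PebblingMove.reflTransGen_lift {W : Type*} {K : SimpleGraph W}
    (f : G ↪g K) {x y : V → ℕ} (h : Relation.ReflTransGen (PebblingMove G) x y) {C : W → ℕ}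
    (hC : ∀ u, C (f u) = x u) :
    ∃ D, Relation.ReflTransGen (PebblingMove K) C D ∧ ∀ u, D (f u) = y u := by
  induction h with
  | refl => exact ⟨C, .refl, hC⟩
  | tail _ hmove ih =>
    obtain ⟨D, hCD, hD⟩ := ih
    obtain ⟨D', hDD', hD'⟩ := hmove.lift f hD
    exact ⟨D', hCD.tail hDD', hD'⟩

end Moves

namespace NSolvable

variable {V : Type*} {G : SimpleGraph V}

theorem of_reflTransGen {c d : V → ℕ} {r : V} {t : ℕ}
    (hcd : Relation.ReflTransGen (PebblingMove G) c d) (h : NSolvable G d r t) :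
    NSolvable G c r t :=
  let ⟨e, hde, he⟩ := h
  ⟨e, hcd.trans hde, he⟩

theorem add {c e : V → ℕ} {r : V} {s t : ℕ} (hc : NSolvable G c r s) (he : NSolvable G e r t) :
    NSolvable G (c + e) r (s + t) :=
  let ⟨c', hcc', hc'⟩ := hc
  let ⟨e', hee', he'⟩ := he
  ⟨c' + e', PebblingMove.reflTransGen_add hcc' hee', add_le_add hc' he'⟩

theorem lift {W : Type*} {K : SimpleGraph W} (f : G ↪g K) {x : V → ℕ}
    {r : V} {t : ℕ} (h : NSolvable G x r t) {C : W → ℕ} (hC : ∀ u, C (f u) = x u) :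
    NSolvable K C (f r) t :=
  let ⟨_, hxy, hy⟩ := h
  let ⟨D, hCD, hD⟩ := PebblingMove.reflTransGen_lift f hxy hC
  ⟨D, hCD, (hD r).symm ▸ hy⟩

-- Keeping `c w` in the target makes the induction on `k` go through.
theorem of_adj {v w : V} (hadj : G.Adj v w) :
    ∀ (k : ℕ) (c : V → ℕ), 2 * k ≤ c v → NSolvable G c w (c w + k) := by
  intro k
  induction k with
  | zero => exact fun c _ => ⟨c, .refl, le_rfl⟩
  | succ k ih =>
    intro c hc
    classical
    have hvw := G.ne_of_adj hadj
    set c₁ := Function.update (Function.update c v (c v - 2)) w (c w + 1)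
    have hmove : PebblingMove G c c₁ :=
      ⟨v, w, hadj, by omega, by simp [c₁, hvw], by simp [c₁],
        fun u hv hw => by simp [c₁, hv, hw]⟩
    have h₁ := ih c₁ (by simp [c₁, hvw]; omega)
    simp only [c₁, Function.update_self] at h₁
    exact of_reflTransGen (.single hmove) (by rwa [add_right_comm] at h₁)

theorem of_walk {r : V} (t : ℕ) {v : V} (p : G.Walk v r) (c : V → ℕ)
    (hc : t * 2 ^ p.length ≤ c v) : NSolvable G c r t := by
  induction p generalizing c with
  | nil => exact ⟨c, .refl, by simpa using hc⟩
  | cons hadj q ih =>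
    rw [Walk.length_cons, pow_succ, ← mul_assoc, mul_comm _ 2] at hc
    obtain ⟨d, hcd, hd⟩ := of_adj hadj _ c hc
    exact of_reflTransGen hcd (ih d (le_of_add_le_right hd))

end NSolvable

section PebblingNumber

variable {V : Type*} [Fintype V] {G : SimpleGraph V}

/-- Some vertex carries `2 ^ |V|` pebbles, enough to send one along a path to any root. -/
theorem solvable_of_sum_eq_card_mul_two_pow (hG : G.Connected) {c : V → ℕ}
    (hc : ∑ v, c v = Fintype.card V * 2 ^ Fintype.card V) (r : V) : Solvable G c r := by
  classical
  have : Nonempty V := hG.nonempty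
  obtain ⟨v, -, hv⟩ : ∃ v ∈ univ, 2 ^ Fintype.card V ≤ c v :=
    exists_le_of_sum_le univ_nonempty (by simp [hc])
  obtain ⟨p⟩ := hG.preconnected v r
  exact NSolvable.of_walk 1 p.toPath c
    (by rw [one_mul]; exact (Nat.pow_le_pow_right two_pos p.toPath.2.length_lt.le).trans hv)

theorem solvable_of_sum_eq_pebblingNumber (hG : G.Connected) {c : V → ℕ}
    (hc : ∑ v, c v = pebblingNumber G) (r : V) : Solvable G c r :=
  Nat.sInf_mem (s := {k | ∀ c : V → ℕ, ∑ v, c v = k → ∀ r, Solvable G c r})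
    ⟨_, fun _ hc r => solvable_of_sum_eq_card_mul_two_pow hG hc r⟩ c hc r

theorem exists_add_eq_of_le_sum {c : V → ℕ} {k : ℕ} (hk : k ≤ ∑ v, c v) :
    ∃ c₁ c₂ : V → ℕ, c = c₁ + c₂ ∧ ∑ v, c₁ v = k := by
  classical
  induction k with
  | zero => exact ⟨0, c, by simp, by simp⟩
  | succ k ih =>
    obtain ⟨c₁, c₂, rfl, hc₁⟩ := ih (by omega)
    obtain ⟨v, -, hv⟩ : ∃ v ∈ univ, 0 < c₂ v := by
      refine exists_lt_of_sum_lt (?_ : ∑ v, (0 : ℕ) < _)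
      simp only [Pi.add_apply, sum_add_distrib] at hk
      simp only [sum_const_zero]; omega
    refine ⟨c₁ + Pi.single v 1, c₂ - Pi.single v 1, ?_, ?_⟩
    · ext u
      rcases eq_or_ne u v with rfl | hu
      · simp only [Pi.add_apply, Pi.single_eq_same, Pi.sub_apply]; omega
      · simp [hu]
    · simp [Finset.sum_add_distrib, hc₁]

theorem NSolvable.of_mul_pebblingNumber_le (hG : G.Connected) (r : V) :
    ∀ (a : ℕ) (c : V → ℕ), a * pebblingNumber G ≤ ∑ v, c v → NSolvable G c r a := by
  intro a
  induction a with
  | zero => exact fun c _ => ⟨c, .refl, Nat.zero_le _⟩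
  | succ a ih =>
    intro c hc
    obtain ⟨c₁, c₂, rfl, hc₁⟩ := exists_add_eq_of_le_sum (k := pebblingNumber G) (c := c)
      (le_trans (Nat.le_mul_of_pos_left _ a.succ_pos) hc)
    simp only [Pi.add_apply, sum_add_distrib, hc₁, add_mul, one_mul] at hc
    rw [add_comm a]
    exact (solvable_of_sum_eq_pebblingNumber hG hc₁ r).add (ih c₂ (by omega))

end PebblingNumber

section BoxProd

variable {α β : Type*} [Fintype α] [Fintype β] {G : SimpleGraph α} {H : SimpleGraph β}

/-- Split `c` into its slices, solve each inside its own copy of `G`, and add the move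
sequences. -/
theorem exists_reflTransGen_boxProd_slices (hG : G.Connected) (c : α × β → ℕ) (rG : α) :
    ∃ E, Relation.ReflTransGen (PebblingMove (G □ H)) c E ∧
      ∀ j, (∑ i, c (i, j)) / pebblingNumber G ≤ E (rG, j) := by
  classical
  let slice (j : β) : α × β → ℕ := fun p => if p.2 = j then c p else 0
  have hslice (j : β) : ∃ D, Relation.ReflTransGen (PebblingMove (G □ H)) (slice j) D ∧
      (∑ i, c (i, j)) / pebblingNumber G ≤ D (rG, j) :=
    (NSolvable.of_mul_pebblingNumber_le hG rG _ (fun i => c (i, j))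
      (Nat.div_mul_le_self _ _)).lift (G.boxProdLeft H j) (C := slice j) fun i => by simp [slice]
  choose D hD hDj using hslice
  have hc : c = ∑ j, slice j := by ext p; simp [slice, Finset.sum_apply]
  refine ⟨∑ j, D j, hc ▸ PebblingMove.reflTransGen_sum univ fun j _ => hD j, fun j => ?_⟩
  exact (hDj j).trans (by
    simpa [Finset.sum_apply] using
      single_le_sum (f := fun j' => D j' (rG, j)) (fun _ _ => Nat.zero_le _) (mem_univ j))

end BoxProd

/-- If the total `G`-set count of a configuration on `G □ H` is at least
`π(H)`, then the configuration is `(r_G, r_H)`-solvable. -/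
theorem stmt0 {α β : Type*} [Fintype α] [Fintype β]
    (G : SimpleGraph α) (H : SimpleGraph β) (hG : G.Connected) (hH : H.Connected)
    (c : α × β → ℕ) (rG : α) (rH : β)
    (h : pebblingNumber H ≤ ∑ j : β, (∑ i : α, c (i, j)) / pebblingNumber G) :
    Solvable (G.boxProd H) c (rG, rH) := by
  obtain ⟨E, hcE, hE⟩ := exists_reflTransGen_boxProd_slices (H := H) hG c rG
  have hcolumn : NSolvable H (fun j => E (rG, j)) rH 1 :=
    NSolvable.of_mul_pebblingNumber_le hH rH 1 _
      (by rw [one_mul]; exact h.trans (sum_le_sum fun j _ => hE j))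
  exact NSolvable.of_reflTransGen hcE (hcolumn.lift (G.boxProdRight H rG) fun _ => rfl)
end

section
/- Let G and H be finite connected simple graphs, fix a root (r_G, r_H) of G□H, and let c be a pebbling configuration on G□H. If Σ_{j ∈ V(H)\{r_H}} ( Σ_{i∈V(G)} ⌊c(i,j) / 2^{dist_H(j, r_H)}⌋ ) + c̃_{r_H} ≥ π(G), then c is (r_G, r_H)-solvable. -/
open SimpleGraph Finset

/-!
Every `2^d`-stack on a vertex `(i, j)` with `d = dist_H(j, r_H)` can be walked, inside the copy
of `H` through `i`, along a shortest path to `(i, r_H)`, delivering one pebble there; doing this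
for all stacks spends only the pebbles of the stacks themselves. Afterwards the root slice, a
copy of `G`, carries at least `π(G)` pebbles, so the moves solving it in `G` replay in `G □ H`.
-/

lemma SimpleGraph.Reachable.dist_boxProd {α β : Type*} {G : SimpleGraph α} {H : SimpleGraph β}
    {x y : α × β} (hG : G.Reachable x.1 y.1) (hH : H.Reachable x.2 y.2) :
    (G □ H).dist x y = G.dist x.1 y.1 + H.dist x.2 y.2 := by
  have hGH : (G □ H).Reachable x y := reachable_boxProd.2 ⟨hG, hH⟩
  have := hGH.coe_dist_eq_edist
  rw [edist_boxProd, ← hG.coe_dist_eq_edist, ← hH.coe_dist_eq_edist] at this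
  exact_mod_cast this

section Pebbling

variable {V W : Type*} {K : SimpleGraph V} {L : SimpleGraph W}

lemma exists_add_single_eq_add_single [DecidableEq V] {c : V → ℕ} {v : V} {a : ℕ}
    (w : V) (b : ℕ) (h : a ≤ c v) : ∃ c' : V → ℕ, c' + Pi.single v a = c + Pi.single w b := by
  refine ⟨c - Pi.single v a + Pi.single w b, funext fun x => ?_⟩
  by_cases hx : x = v
  · subst hx; simp only [Pi.add_apply, Pi.sub_apply, Pi.single_eq_same]; omega
  · simp [Pi.single_apply, hx]

/-- Moves are encoded additively, `c' + 2•δ_v = c + δ_w`, to avoid truncated subtraction. -/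
lemma pebblingMove_iff [DecidableEq V] {c c' : V → ℕ} :
    PebblingMove K c c' ↔ ∃ v w, K.Adj v w ∧ c' + Pi.single v 2 = c + Pi.single w 1 := by
  constructor
  · rintro ⟨v, w, hvw, hv, hc'v, hc'w, hc'⟩
    refine ⟨v, w, hvw, funext fun x => ?_⟩
    by_cases hxv : x = v
    · subst hxv; simp [hvw.ne, hc'v]; omega
    · by_cases hxw : x = w
      · subst hxw; simp [hxv, hc'w]
      · simp [hxv, hxw, hc' x hxv hxw]
  · rintro ⟨v, w, hvw, h⟩
    have hx := congrFun h
    refine ⟨v, w, hvw, ?_, ?_, ?_, fun x hxv hxw => ?_⟩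
    · have := hx v; simp [hvw.ne] at this; omega
    · have := hx v; simp [hvw.ne] at this; omega
    · have := hx w; simp [hvw.ne.symm] at this; omega
    · simpa [hxv, hxw] using hx x

lemma NSolvable.of_reflTransGen_s10 {c c' : V → ℕ} {r : V} {t : ℕ}
    (h : Relation.ReflTransGen (PebblingMove K) c c') (h' : NSolvable K c' r t) :
    NSolvable K c r t :=
  let ⟨d, hd, hr⟩ := h'
  ⟨d, h.trans hd, hr⟩

lemma exists_reflTransGen_of_adj [DecidableEq V] {u v : V} (h : K.Adj u v) (k : ℕ)
    {c : V → ℕ} (hc : 2 * k ≤ c u) :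
    ∃ c', Relation.ReflTransGen (PebblingMove K) c c' ∧
      c' + Pi.single u (2 * k) = c + Pi.single v k := by
  induction k generalizing c with
  | zero => exact ⟨c, .refl, by simp⟩
  | succ k ih =>
    obtain ⟨c₁, e₁⟩ := exists_add_single_eq_add_single v 1 (by omega : 2 ≤ c u)
    have hc₁ : 2 * k ≤ c₁ u := by have := congrFun e₁ u; simp [h.ne] at this; omega
    obtain ⟨c₂, hc₁c₂, e₂⟩ := ih hc₁
    refine ⟨c₂, .head (pebblingMove_iff.2 ⟨u, v, h, e₁⟩) hc₁c₂, ?_⟩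
    rw [mul_add, mul_one, Pi.single_add, ← add_assoc, e₂, add_right_comm, e₁, add_assoc,
      ← Pi.single_add, add_comm 1 k]

lemma exists_reflTransGen_of_walk [DecidableEq V] {u r : V} (p : K.Walk u r) (m : ℕ)
    {c : V → ℕ} (hc : m * 2 ^ p.length ≤ c u) :
    ∃ c', Relation.ReflTransGen (PebblingMove K) c c' ∧
      c' + Pi.single u (m * 2 ^ p.length) = c + Pi.single r m := by
  induction p generalizing c with
  | nil => exact ⟨c, .refl, by simp⟩
  | @cons u v r h p ih =>
    have hcost : m * 2 ^ (p.cons h).length = 2 * (m * 2 ^ p.length) := by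
      rw [Walk.length_cons, pow_succ]; ring
    rw [hcost] at hc ⊢
    obtain ⟨c₁, hcc₁, e₁⟩ := exists_reflTransGen_of_adj h _ hc
    have hc₁ : m * 2 ^ p.length ≤ c₁ v := by
      have := congrFun e₁ v; simp [h.ne.symm] at this; omega
    obtain ⟨c₂, hc₁c₂, e₂⟩ := ih hc₁
    refine ⟨c₂, hcc₁.trans hc₁c₂, add_right_cancel (b := Pi.single v (m * 2 ^ p.length)) ?_⟩
    rw [add_right_comm, e₂, add_right_comm, e₁, add_right_comm]

lemma exists_reflTransGen_add_sum_single [DecidableEq V] (T : Finset V) (t : V → V) (m : V → ℕ)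
    (hreach : ∀ u ∈ T, K.Reachable u (t u)) {c : V → ℕ}
    (hc : ∀ u ∈ T, m u * 2 ^ K.dist u (t u) ≤ c u) :
    ∃ c', Relation.ReflTransGen (PebblingMove K) c c' ∧
      c' + ∑ u ∈ T, Pi.single u (m u * 2 ^ K.dist u (t u)) =
        c + ∑ u ∈ T, Pi.single (t u) (m u) := by
  induction T using Finset.induction_on with
  | empty => exact ⟨c, .refl, by simp⟩
  | @insert a T ha ih =>
    obtain ⟨c₁, hcc₁, e₁⟩ := ih (fun u hu => hreach u (mem_insert_of_mem hu))
      (fun u hu => hc u (mem_insert_of_mem hu))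
    obtain ⟨p, hp⟩ := (hreach a (mem_insert_self a T)).exists_walk_length_eq_dist
    have hc₁ : m a * 2 ^ p.length ≤ c₁ a := by
      have := congrFun e₁ a
      simp only [Pi.add_apply, Finset.sum_apply, Finset.sum_pi_single, if_neg ha] at this
      have := hp ▸ hc a (mem_insert_self a T)
      omega
    obtain ⟨c₂, hc₁c₂, e₂⟩ := exists_reflTransGen_of_walk p (m a) hc₁
    rw [hp] at e₂
    refine ⟨c₂, hcc₁.trans hc₁c₂, ?_⟩
    rw [sum_insert ha, sum_insert ha, ← add_assoc, e₂, add_right_comm, e₁, add_assoc,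
      add_comm (∑ u ∈ T, _)]

lemma exists_reflTransGen_sum_eq [DecidableEq V] (S T : Finset V) (hST : Disjoint S T)
    (t : V → V) (ht : ∀ u ∈ T, t u ∈ S) (m : V → ℕ) (hreach : ∀ u ∈ T, K.Reachable u (t u))
    {c : V → ℕ} (hc : ∀ u ∈ T, m u * 2 ^ K.dist u (t u) ≤ c u) :
    ∃ c', Relation.ReflTransGen (PebblingMove K) c c' ∧
      ∑ x ∈ S, c' x = ∑ x ∈ S, c x + ∑ u ∈ T, m u := by
  obtain ⟨c', hcc', e⟩ := exists_reflTransGen_add_sum_single T t m hreach hc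
  refine ⟨c', hcc', ?_⟩
  have := congrArg (fun f => ∑ x ∈ S, f x) e
  simp only [Pi.add_apply, Finset.sum_apply, sum_add_distrib] at this
  rw [sum_comm, sum_comm (s := S)] at this
  simp only [Finset.sum_pi_single'] at this
  rwa [sum_ite_of_true ht, sum_ite_of_false fun u hu hus => disjoint_left.1 hST hus hu,
    sum_const_zero, add_zero] at this

lemma exists_reflTransGen_map (f : K ↪g L) {c d : V → ℕ}
    (hcd : Relation.ReflTransGen (PebblingMove K) c d) {C : W → ℕ} (hC : ∀ i, c i ≤ C (f i)) :
    ∃ D, Relation.ReflTransGen (PebblingMove L) C D ∧ ∀ i, d i ≤ D (f i) := by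
  classical
  induction hcd with
  | refl => exact ⟨C, .refl, hC⟩
  | tail _ hbd ih =>
    obtain ⟨B, hCB, hB⟩ := ih
    obtain ⟨v, w, hvw, e⟩ := pebblingMove_iff.1 hbd
    have hv : 2 ≤ B (f v) := by
      have := congrFun e v; have := hB v; simp [hvw.ne] at *; omega
    obtain ⟨D, e'⟩ := exists_add_single_eq_add_single (f w) 1 hv
    refine ⟨D, hCB.tail (pebblingMove_iff.2 ⟨f v, f w, f.map_adj_iff.2 hvw, e'⟩), fun i => ?_⟩
    have h₁ := congrFun e i
    have h₂ := congrFun e' (f i)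
    have := hB i
    simp only [Pi.add_apply, Pi.single_apply, f.injective.eq_iff] at h₁ h₂
    split_ifs at h₁ h₂ <;> omega

lemma NSolvable.map (f : K ↪g L) {c : V → ℕ} {C : W → ℕ}
    {r : V} {t : ℕ} (h : NSolvable K c r t) (hC : ∀ i, c i ≤ C (f i)) : NSolvable L C (f r) t :=
  let ⟨_, hcd, hd⟩ := h
  let ⟨D, hCD, hD⟩ := exists_reflTransGen_map f hcd hC
  ⟨D, hCD, hd.trans (hD r)⟩

lemma Solvable.mono {c C : V → ℕ} {r : V} (h : Solvable K c r) (hcC : c ≤ C) :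
    Solvable K C r :=
  NSolvable.map Embedding.refl h hcC

lemma solvable_of_card_mul_two_pow_le [Fintype V] (hK : K.Connected) {c : V → ℕ}
    (hc : Fintype.card V * 2 ^ Fintype.card V ≤ ∑ v, c v) (r : V) : Solvable K c r := by
  classical
  have : Nonempty V := hK.nonempty
  obtain ⟨v, -, hv⟩ : ∃ v ∈ univ, 2 ^ Fintype.card V ≤ c v :=
    exists_le_of_sum_le univ_nonempty (by simpa using hc)
  obtain ⟨p, hp, -⟩ := hK.exists_path_of_dist v r
  have hpv : 1 * 2 ^ p.length ≤ c v :=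
    (one_mul _).trans_le ((Nat.pow_le_pow_right two_pos hp.length_lt.le).trans hv)
  obtain ⟨c', hcc', e⟩ := exists_reflTransGen_of_walk p 1 hpv
  refine ⟨c', hcc', ?_⟩
  have := congrFun e r
  simp only [Pi.add_apply, Pi.single_eq_same, Pi.single_apply] at this
  split_ifs at this with hrv
  · subst hrv; omega
  · omega

lemma solvable_of_pebblingNumber_le [Fintype V] (hK : K.Connected) {c : V → ℕ}
    (hc : pebblingNumber K ≤ ∑ v, c v) (r : V) : Solvable K c r := by
  classical
  set P := {k | ∀ c : V → ℕ, (∑ v, c v) = k → ∀ r, Solvable K c r}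
  have hP : pebblingNumber K ∈ P :=
    Nat.sInf_mem ⟨_, fun c hc => solvable_of_card_mul_two_pow_le hK hc.ge⟩
  have hP_succ : ∀ k ∈ P, k + 1 ∈ P := by
    intro k hk c hc r
    obtain ⟨v, -, hv⟩ := exists_ne_zero_of_sum_ne_zero (s := univ) (f := c) (by omega)
    obtain ⟨c', e⟩ := exists_add_single_eq_add_single v 0 (Nat.one_le_iff_ne_zero.2 hv)
    rw [Pi.single_zero, add_zero] at e
    have hc' : ∑ v, c' v = k := by
      have := congrArg (fun f => ∑ x, f x) e
      simp only [Pi.add_apply, sum_add_distrib, Fintype.sum_pi_single'] at this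
      omega
    exact (hk c' hc' r).mono (e ▸ le_self_add)
  -- `P` is upward closed, so it contains every size from its infimum on.
  exact Nat.le_induction (P := fun k _ => k ∈ P) hP (fun k _ => hP_succ k) _ hc c rfl r

end Pebbling

/-- constraint B.2(K) is valid: if the stacks at the non-root slices
(counted toward the root slice) together with the pebbles already on the root slice
number at least `π(G)`, the configuration is solvable. -/
theorem stmt10 {α β : Type*} [Fintype α] [Fintype β] [DecidableEq β]
    (G : SimpleGraph α) (H : SimpleGraph β) (hG : G.Connected) (hH : H.Connected)
    (c : α × β → ℕ) (rG : α) (rH : β)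
    (h : (∑ j ∈ (Finset.univ \ {rH} : Finset β),
          ∑ i : α, c (i, j) / 2 ^ (H.dist j rH))
        + (∑ i : α, c (i, rH)) ≥ pebblingNumber G) :
    Solvable (G.boxProd H) c (rG, rH) := by
  classical
  have hdist : ∀ u : α × β, (G □ H).dist u (u.1, rH) = H.dist u.2 rH := fun u => by
    rw [Reachable.dist_boxProd (x := u) (y := (u.1, rH)) .rfl (hH u.2 rH), dist_self, zero_add]
  obtain ⟨C, hcC, hC⟩ := exists_reflTransGen_sum_eq (K := G □ H) (c := c)
    (univ ×ˢ {rH}) (univ ×ˢ (univ \ {rH})) (by simp [Finset.disjoint_left])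
    (fun u => (u.1, rH)) (by simp) (fun u => c u / 2 ^ H.dist u.2 rH)
    (fun u _ => reachable_boxProd.2 ⟨.rfl, hH u.2 rH⟩)
    (fun u _ => hdist u ▸ Nat.div_mul_le_self _ _)
  have hsize : pebblingNumber G ≤ ∑ i, C (i, rH) := by
    rw [sum_product, sum_product, sum_product_right] at hC
    simp only [sum_singleton] at hC
    omega
  exact NSolvable.of_reflTransGen_s10 hcC
    ((solvable_of_pebblingNumber_le hG hsize rG).map (boxProdLeft G H rH) fun _ => le_rfl)
end
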